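/- arXiv:2507.09384 — 5 statements merged into one kernel-verified Lean document; each statement's English description precedes it below -/
import Mathlib

section
/- Let a, b, c, η be real numbers with c > 0, η > 0, and define ψ(t) = a + b·t − c·|t| for t ∈ [−η, η]. Then ∫_{−η}^{η} ψ(t)² dt ≥ (1/6)·c²·η³. -/
/-! On `[0, η]` and on `[-η, 0]` the function `a + b t - c |t|` is affine, so the integral is
an explicit cubic in `η`; subtracting `c² η³ / 6` leaves `η (2a - cη)² / 2 + 2 b² η³ / 3 ≥ 0`. -/

open intervalIntegral

lemma integral_sq_add_mul (a d p q : ℝ) :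
    ∫ t in p..q, (a + d * t) ^ 2 =
      (a ^ 2 * q + a * d * q ^ 2 + d ^ 2 * q ^ 3 / 3)
        - (a ^ 2 * p + a * d * p ^ 2 + d ^ 2 * p ^ 3 / 3) := by
  apply integral_eq_sub_of_hasDerivAt
  · intro x _
    have h := ((hasDerivAt_id x).const_mul (a ^ 2)).add
      (((hasDerivAt_pow 2 x).const_mul (a * d)).add
        ((hasDerivAt_pow 3 x).const_mul (d ^ 2 / 3)))
    convert h using 1
    · funext t; simp only [id_eq, Pi.add_apply]; ring
    · simp only [mul_one, Nat.cast_ofNat, Nat.add_one_sub_one, pow_one]; ring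
  · exact (by fun_prop : Continuous fun t : ℝ => (a + d * t) ^ 2).intervalIntegrable p q

lemma integral_sq_add_mul_sub_mul_abs (a b c η : ℝ) (hη : 0 ≤ η) :
    ∫ t in (-η)..η, (a + b * t - c * |t|) ^ 2 =
      2 * a ^ 2 * η - 2 * a * c * η ^ 2 + 2 * (b ^ 2 + c ^ 2) * η ^ 3 / 3 := by
  have hcont : Continuous fun t : ℝ => (a + b * t - c * |t|) ^ 2 := by fun_prop
  have hneg : ∫ t in (-η)..0, (a + b * t - c * |t|) ^ 2 =
      ∫ t in (-η)..0, (a + (b + c) * t) ^ 2 := by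
    refine integral_congr fun t ht => ?_
    rw [Set.uIcc_of_le (by linarith)] at ht
    simp only [abs_of_nonpos ht.2]
    ring
  have hpos : ∫ t in (0)..η, (a + b * t - c * |t|) ^ 2 =
      ∫ t in (0)..η, (a + (b - c) * t) ^ 2 := by
    refine integral_congr fun t ht => ?_
    rw [Set.uIcc_of_le hη] at ht
    simp only [abs_of_nonneg ht.1]
    ring
  rw [← integral_add_adjacent_intervals (hcont.intervalIntegrable (-η) 0)
    (hcont.intervalIntegrable 0 η), hneg, hpos, integral_sq_add_mul, integral_sq_add_mul]
  ring

theorem stmt_6_general (a b c η : ℝ) (hη : 0 < η) :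
    (1 / 6) * c ^ 2 * η ^ 3 ≤ ∫ t in (-η)..η, (a + b * t - c * |t|) ^ 2 := by
  rw [integral_sq_add_mul_sub_mul_abs a b c η hη.le]
  have hsq : 0 ≤ η * (2 * a - c * η) ^ 2 / 2 + 2 * b ^ 2 * η ^ 3 / 3 := by positivity
  linarith

/-- `∫_{−η}^{η} (a + b t − c |t|)² dt ≥ (1/6) c² η³`. -/
theorem stmt_6 (a b c η : ℝ) (hc : 0 < c) (hη : 0 < η) :
    (1 / 6) * c ^ 2 * η ^ 3 ≤ ∫ t in (-η)..η, (a + b * t - c * |t|) ^ 2 :=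
  stmt_6_general a b c η hη
end

section
/- Let n ∈ ℕ, c > 0, η > 0, and let f : ℝⁿ → ℝⁿ (with ℓ₂ norm on the target) be given by f(x) = c·(|x₁|,…,|x_n|). Let B = [−η,η]ⁿ and let g = (g₁,…,g_n) : B → ℝⁿ be continuous such that for each i and each fixed z ∈ [−η,η]ⁿ the function t ↦ ∂g_i/∂x_i(z₁,…,z_{i−1},t,z_{i+1},…,z_n) exists and is uniformly continuous on (−η,η) with common modulus ω. If ω(η) ≤ c/2, then (1/λ(B))·∫_B ‖g(x)−f(x)‖² dλ(x) ≥ (1/12)·n·η²·(c−2ω(η))², and in particular sup_{x∈B} ‖g(x)−f(x)‖ ≥ (√3/6)·√n·η·(c−2ω(η)). -/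
/-!
Fix a coordinate `i`, a line `t ↦ z + t eᵢ` through the cube, and write `G t = gᵢ (z + t eᵢ)`.
Because `G'` oscillates by at most `ω η`, the symmetrised defect `ψ t = (G t + G (-t)) / 2 - c t`
decreases on `[0, η]` with slope at most `-(c - ω η)`. So `ψ` has at most one sign change `m`, and
`|ψ t| ≥ (c - ω η) |t - m|`; this gives
`∫_{-η}^{η} (G t - c |t|)² ≥ 2 ∫_0^η ψ² ≥ (c - ω η)² η³ / 6`.
By Fubini the average of `(gᵢ - fᵢ)²` over the cube is at least `(c - ω η)² η² / 12`; summing over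
`i` gives the `L²` bound, and the uniform bound follows since an average is at most a supremum.
-/

open MeasureTheory Set Function

theorem exists_mul_abs_sub_le_abs_of_slope_le {ψ : ℝ → ℝ} {a b k : ℝ} (hab : a ≤ b)
    (hψ : ContinuousOn ψ (Icc a b))
    (hslope : ∀ s ∈ Icc a b, ∀ t ∈ Icc a b, s ≤ t → ψ t - ψ s ≤ -k * (t - s)) :
    ∃ m ∈ Icc a b, ∀ t ∈ Icc a b, k * |t - m| ≤ |ψ t| := by
  obtain ⟨m, hm, hleft, hright⟩ :
      ∃ m ∈ Icc a b, (m = a ∨ 0 ≤ ψ m) ∧ (m = b ∨ ψ m ≤ 0) := by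
    rcases le_or_gt 0 (ψ b) with hb | hb
    · exact ⟨b, right_mem_Icc.2 hab, .inr hb, .inl rfl⟩
    rcases le_or_gt (ψ a) 0 with ha | ha
    · exact ⟨a, left_mem_Icc.2 hab, .inl rfl, .inr ha⟩
    obtain ⟨m, hm, hψm⟩ := intermediate_value_Icc' hab hψ ⟨hb.le, ha.le⟩
    exact ⟨m, hm, .inr hψm.ge, .inr hψm.le⟩
  refine ⟨m, hm, fun t ht => ?_⟩
  rcases le_total t m with htm | hmt
  · have hψt := hslope t ht m hm htm
    rcases hleft with rfl | hψm
    · simp [le_antisymm htm ht.1]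
    · rw [abs_of_nonpos (by linarith)]
      linarith [le_abs_self (ψ t)]
  · have hψt := hslope m hm t ht hmt
    rcases hright with rfl | hψm
    · simp [le_antisymm ht.2 hmt]
    · rw [abs_of_nonneg (by linarith)]
      linarith [neg_abs_le (ψ t)]

theorem cube_div_twelve_le_integral_sq_sub {a b m : ℝ} (hm : m ∈ Icc a b) :
    (b - a) ^ 3 / 12 ≤ ∫ t in a..b, (t - m) ^ 2 := by
  rw [intervalIntegral.integral_comp_sub_right (fun t => t ^ 2), integral_pow]
  -- `4 (u³ + v³) - (u + v)³ = 3 (u + v) (u - v)²` with `u = b - m`, `v = m - a`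
  nlinarith [mul_nonneg (mul_nonneg (sub_nonneg.2 hm.1) (sub_nonneg.2 hm.2))
    (sq_nonneg (b + a - 2 * m)), sq_nonneg (b + a - 2 * m), sub_nonneg.2 hm.1, sub_nonneg.2 hm.2]

theorem mul_cube_div_twelve_le_integral_sq_of_slope_le {ψ : ℝ → ℝ} {a b k : ℝ}
    (hab : a ≤ b) (hk : 0 ≤ k) (hψ : ContinuousOn ψ (Icc a b))
    (hslope : ∀ s ∈ Icc a b, ∀ t ∈ Icc a b, s ≤ t → ψ t - ψ s ≤ -k * (t - s)) :
    k ^ 2 * (b - a) ^ 3 / 12 ≤ ∫ t in a..b, ψ t ^ 2 := by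
  obtain ⟨m, hm, hψm⟩ := exists_mul_abs_sub_le_abs_of_slope_le hab hψ hslope
  calc k ^ 2 * (b - a) ^ 3 / 12 ≤ ∫ t in a..b, k ^ 2 * (t - m) ^ 2 := by
        rw [intervalIntegral.integral_const_mul, mul_div_assoc]
        exact mul_le_mul_of_nonneg_left (cube_div_twelve_le_integral_sq_sub hm) (sq_nonneg k)
    _ ≤ ∫ t in a..b, ψ t ^ 2 := by
        refine intervalIntegral.integral_mono_on hab
          ((by fun_prop : Continuous fun t => k ^ 2 * (t - m) ^ 2).intervalIntegrable a b)
          ((hψ.pow 2).intervalIntegrable_of_Icc hab) fun t ht => ?_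
        rw [← sq_abs (ψ t), ← sq_abs (t - m), ← mul_pow]
        exact pow_le_pow_left₀ (by positivity) (hψm t ht) 2

theorem intervalIntegral.integral_neg_self_eq_integral_add_comp_neg {φ : ℝ → ℝ} {η : ℝ}
    (hφ : IntervalIntegrable φ volume (-η) η) :
    ∫ t in (-η)..η, φ t = ∫ t in 0..η, (φ t + φ (-t)) := by
  have h0 : (0 : ℝ) ∈ uIcc (-η) η := by
    rcases le_total 0 η with h | h
    · exact mem_uIcc.2 (.inl ⟨by linarith, h⟩)
    · exact mem_uIcc.2 (.inr ⟨h, by linarith⟩)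
  have hneg : IntervalIntegrable φ volume (-η) 0 := hφ.mono_set (uIcc_subset_uIcc_left h0)
  have hpos : IntervalIntegrable φ volume 0 η := hφ.mono_set (uIcc_subset_uIcc_right h0)
  have hneg' : IntervalIntegrable (fun t => φ (-t)) volume 0 η := by
    simpa using ((IntervalIntegrable.iff_comp_neg).mp hneg).symm
  rw [← intervalIntegral.integral_add_adjacent_intervals hneg hpos,
    intervalIntegral.integral_add hpos hneg', add_comm]
  simp [intervalIntegral.integral_comp_neg φ]

theorem mul_cube_div_six_le_integral_sq_sub_mul_abs {G p : ℝ → ℝ} {c η ω₀ : ℝ} (hη : 0 ≤ η)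
    (hωc : ω₀ ≤ c) (hG : ContinuousOn G (Icc (-η) η))
    (hderiv : ∀ t ∈ Ioo (-η) η, HasDerivAt G (p t) t)
    (hp : ∀ t ∈ Ioo (-η) η, |p t - p 0| ≤ ω₀) :
    (c - ω₀) ^ 2 * η ^ 3 / 6 ≤ ∫ t in (-η)..η, (G t - c * |t|) ^ 2 := by
  set ψ : ℝ → ℝ := fun t => (G t + G (-t)) / 2 - c * t
  have hsub : Icc 0 η ⊆ Icc (-η) η := Icc_subset_Icc (by linarith) le_rfl
  have hneg : MapsTo Neg.neg (Icc 0 η) (Icc (-η) η) := fun t ht =>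
    ⟨neg_le_neg ht.2, by linarith [ht.1]⟩
  have hψ : ContinuousOn ψ (Icc 0 η) :=
    (((hG.mono hsub).add (hG.comp continuousOn_neg hneg)).div_const 2).sub
      (continuous_const.mul continuous_id).continuousOn
  have hψ' : ∀ t ∈ Ioo 0 η, HasDerivAt ψ ((p t - p (-t)) / 2 - c) t := by
    intro t ht
    have hG' := (hderiv t ⟨by linarith [ht.1], ht.2⟩).add
      ((hderiv (-t) ⟨neg_lt_neg ht.2, by linarith [ht.1]⟩).comp t (hasDerivAt_neg t))
    exact ((hG'.div_const 2).sub ((hasDerivAt_id t).const_mul c)).congr_deriv (by ring)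
  have hslope :
      ∀ s ∈ Icc 0 η, ∀ t ∈ Icc 0 η, s ≤ t → ψ t - ψ s ≤ -(c - ω₀) * (t - s) := by
    refine (convex_Icc 0 η).image_sub_le_mul_sub_of_deriv_le hψ
      (fun t ht => ?_) fun t ht => ?_
    · rw [interior_Icc] at ht
      exact (hψ' t ht).differentiableAt.differentiableWithinAt
    · rw [interior_Icc] at ht
      have h₁ := abs_le.1 (hp t ⟨by linarith [ht.1], ht.2⟩)
      have h₂ := abs_le.1 (hp (-t) ⟨neg_lt_neg ht.2, by linarith [ht.1]⟩)
      rw [(hψ' t ht).deriv]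
      linarith [h₁.2, h₂.1]
  have hφ : ContinuousOn (fun t => (G t - c * |t|) ^ 2) (Icc (-η) η) :=
    (hG.sub (by fun_prop : Continuous fun t : ℝ => c * |t|).continuousOn).pow 2
  have hψ2 := mul_cube_div_twelve_le_integral_sq_of_slope_le hη (by linarith) hψ hslope
  rw [intervalIntegral.integral_neg_self_eq_integral_add_comp_neg
    (hφ.intervalIntegrable_of_Icc (by linarith))]
  calc (c - ω₀) ^ 2 * η ^ 3 / 6 ≤ ∫ t in 0..η, 2 * ψ t ^ 2 := by
        rw [intervalIntegral.integral_const_mul]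
        linarith
    _ ≤ ∫ t in 0..η, ((G t - c * |t|) ^ 2 + (G (-t) - c * |-t|) ^ 2) := by
        refine intervalIntegral.integral_mono_on hη
          ((continuousOn_const.mul (hψ.pow 2)).intervalIntegrable_of_Icc hη) ?_ fun t ht => ?_
        · exact ((hφ.mono hsub).add (hφ.comp continuousOn_neg hneg)).intervalIntegrable_of_Icc
            hη
        · rw [abs_neg, abs_of_nonneg ht.1]
          simp only [ψ]
          nlinarith [sq_nonneg (G t - G (-t))]

theorem le_integral_Icc_pi_of_le_integral_line {m : ℕ} (i : Fin (m + 1)) {a b K : ℝ}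
    (hab : a ≤ b) {F : (Fin (m + 1) → ℝ) → ℝ}
    (hF : ContinuousOn F (Icc (fun _ => a) (fun _ => b)))
    (hline : ∀ z ∈ Icc (fun _ => a) (fun _ => b), K ≤ ∫ t in a..b, F (update z i t)) :
    (b - a) ^ m * K ≤ ∫ x in Icc (fun _ => a) (fun _ => b), F x := by
  set e := (MeasurableEquiv.piFinSuccAbove (fun _ : Fin (m + 1) => ℝ) i).symm
  set u : Set (Fin m → ℝ) := Icc (fun _ => a) (fun _ => b)
  have he : ∀ z : ℝ × (Fin m → ℝ), e z = i.insertNth z.1 z.2 := fun _ => rfl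
  have hpre : e ⁻¹' Icc (fun _ => a) (fun _ => b) = Icc a b ×ˢ u := by
    ext z
    rw [mem_preimage, he, Fin.insertNth_mem_Icc, mem_prod]
  have hcompact : IsCompact (Icc a b ×ˢ u) := isCompact_Icc.prod isCompact_Icc
  have hcont : ContinuousOn (fun z => F (e z)) (Icc a b ×ˢ u) :=
    hF.comp (continuous_fst.finInsertNth (A := fun _ => ℝ) i continuous_snd).continuousOn
      (fun z hz => by rw [← hpre] at hz; exact hz)
  have hint :
      Integrable (fun z => F (e z)) ((volume.restrict (Icc a b)).prod (volume.restrict u)) := by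
    rw [Measure.prod_restrict, ← Measure.volume_eq_prod]
    exact hcont.integrableOn_compact hcompact
  have hinner : ∀ y ∈ u, K ≤ ∫ t in Icc a b, F (e (t, y)) := by
    intro y hy
    have := hline (i.insertNth a y) (Fin.insertNth_mem_Icc.2 ⟨left_mem_Icc.2 hab, hy⟩)
    simpa [Fin.update_insertNth, he, intervalIntegral.integral_of_le hab,
      integral_Icc_eq_integral_Ioc] using this
  calc (b - a) ^ m * K = ∫ _ in u, K := by
        rw [setIntegral_const, smul_eq_mul, measureReal_def, Real.volume_Icc_pi_toReal
          fun _ => hab]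
        simp
    _ ≤ ∫ y in u, ∫ t in Icc a b, F (e (t, y)) :=
        setIntegral_mono_on (integrableOn_const isCompact_Icc.measure_lt_top.ne)
          hint.integral_prod_right measurableSet_Icc hinner
    _ = ∫ z in Icc a b ×ˢ u, F (e z) := by
        rw [Measure.volume_eq_prod, ← Measure.prod_restrict]
        exact (integral_prod_symm _ hint).symm
    _ = ∫ x in Icc (fun _ => a) (fun _ => b), F x := by
        rw [← hpre]
        exact (volume_preserving_piFinSuccAbove (fun _ => ℝ) i).symm.setIntegral_preimage_emb
          e.measurableEmbedding F _

namespace EuclideanSpace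

variable {ι : Type*} {η : ℝ}

def cube (ι : Type*) (η : ℝ) : Set (EuclideanSpace ℝ ι) := {x | ∀ i, |x i| ≤ η}

theorem cube_eq_preimage_ofLp (ι : Type*) (η : ℝ) :
    cube ι η = WithLp.ofLp ⁻¹' Icc (fun _ => -η) (fun _ => η) := by
  ext x
  simp [cube, abs_le, Pi.le_def, forall_and]

theorem isCompact_cube [Fintype ι] (η : ℝ) : IsCompact (cube ι η) := by
  rw [cube_eq_preimage_ofLp]
  exact (PiLp.homeomorph 2 _).isCompact_preimage.2 isCompact_Icc

theorem volume_cube_toReal [Fintype ι] (hη : 0 ≤ η) :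
    (volume (cube ι η)).toReal = (2 * η) ^ Fintype.card ι := by
  rw [cube_eq_preimage_ofLp, (PiLp.volume_preserving_ofLp ι).measure_preimage
    measurableSet_Icc.nullMeasurableSet, Real.volume_Icc_pi_toReal fun _ => by linarith]
  simp [two_mul]

theorem toLp_update_mem_cube [DecidableEq ι] {z : EuclideanSpace ℝ ι} (hz : z ∈ cube ι η)
    (i : ι) {t : ℝ} (ht : |t| ≤ η) : WithLp.toLp 2 (update z.ofLp i t) ∈ cube ι η := by
  intro j
  rcases eq_or_ne j i with rfl | hj
  · simpa using ht
  · simpa [hj] using hz j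

theorem le_average_cube_of_le_average_line {n : ℕ} (i : Fin n) {K : ℝ} (hη : 0 < η)
    {F : EuclideanSpace ℝ (Fin n) → ℝ} (hF : ContinuousOn F (cube (Fin n) η))
    (hline : ∀ z ∈ cube (Fin n) η,
      2 * η * K ≤ ∫ t in (-η)..η, F (WithLp.toLp 2 (update z.ofLp i t))) :
    K ≤ (volume (cube (Fin n) η)).toReal⁻¹ * ∫ x in cube (Fin n) η, F x := by
  obtain ⟨m, rfl⟩ : ∃ m, n = m + 1 := ⟨n - 1, by have := i.pos; omega⟩
  rw [volume_cube_toReal hη.le, Fintype.card_fin, le_inv_mul_iff₀ (by positivity),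
    cube_eq_preimage_ofLp, ← (PiLp.volume_preserving_toLp _).setIntegral_preimage_emb
      (MeasurableEquiv.toLp 2 _).measurableEmbedding]
  have hFcont : ContinuousOn (fun x => F (WithLp.toLp 2 x)) (Icc (fun _ => -η) fun _ => η) :=
    hF.comp (PiLp.continuous_toLp 2 _).continuousOn fun x hx => by
      rwa [cube_eq_preimage_ofLp]
  have := le_integral_Icc_pi_of_le_integral_line i (by linarith) hFcont fun z hz =>
    hline (WithLp.toLp 2 z) (by rwa [cube_eq_preimage_ofLp])
  calc (2 * η) ^ (m + 1) * K = (η - -η) ^ m * (2 * η * K) := by ring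
    _ ≤ _ := this

theorem mul_sq_div_twelve_le_average_sq_sub_mul_abs {n : ℕ} (i : Fin n) {c ω₀ : ℝ}
    (hη : 0 < η) (hωc : ω₀ ≤ c) {G p : EuclideanSpace ℝ (Fin n) → ℝ}
    (hG : ContinuousOn G (cube (Fin n) η))
    (hderiv : ∀ z ∈ cube (Fin n) η, ∀ t ∈ Ioo (-η) η,
      HasDerivAt (fun s => G (WithLp.toLp 2 (update z.ofLp i s)))
        (p (WithLp.toLp 2 (update z.ofLp i t))) t)
    (hp : ∀ z ∈ cube (Fin n) η, ∀ t ∈ Ioo (-η) η,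
      |p (WithLp.toLp 2 (update z.ofLp i t)) - p (WithLp.toLp 2 (update z.ofLp i 0))| ≤ ω₀) :
    (c - ω₀) ^ 2 * η ^ 2 / 12 ≤
      (volume (cube (Fin n) η)).toReal⁻¹ * ∫ x in cube (Fin n) η, (G x - c * |x i|) ^ 2 := by
  refine le_average_cube_of_le_average_line i hη ((hG.sub (by fun_prop)).pow 2) fun z hz => ?_
  have hline : ContinuousOn (fun t => G (WithLp.toLp 2 (update z.ofLp i t))) (Icc (-η) η) :=
    hG.comp (by fun_prop) fun t ht => toLp_update_mem_cube hz i (abs_le.2 ht)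
  convert mul_cube_div_six_le_integral_sq_sub_mul_abs hη.le hωc hline (hderiv z hz) (hp z hz)
    using 1
  · ring
  · simp

end EuclideanSpace

theorem integral_norm_sq_eq_sum {X ι : Type*} [MeasurableSpace X] [Fintype ι] {μ : Measure X}
    {h : X → EuclideanSpace ℝ ι} (hh : ∀ i, Integrable (fun x => h x i ^ 2) μ) :
    ∫ x, ‖h x‖ ^ 2 ∂μ = ∑ i, ∫ x, h x i ^ 2 ∂μ := by
  simp_rw [EuclideanSpace.real_norm_sq_eq]
  exact integral_finsetSum _ fun i _ => hh i

theorem inv_measure_mul_setIntegral_norm_sq_le_iSup_sq {X E : Type*} [TopologicalSpace X]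
    [MeasurableSpace X] [OpensMeasurableSpace X] [T2Space X] [NormedAddCommGroup E] {μ : Measure X}
    [IsFiniteMeasureOnCompacts μ] {K : Set X} (hK : IsCompact K) {h : X → E}
    (hh : ContinuousOn h K) :
    (μ K).toReal⁻¹ * ∫ x in K, ‖h x‖ ^ 2 ∂μ ≤ (⨆ x : K, ‖h x‖) ^ 2 := by
  have hbdd : BddAbove (range fun x : K => ‖h x‖) := by
    simpa only [image_eq_range] using hK.bddAbove_image hh.norm
  have hint : ∫ x in K, ‖h x‖ ^ 2 ∂μ ≤ (μ K).toReal * (⨆ x : K, ‖h x‖) ^ 2 := by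
    rw [← measureReal_def, ← smul_eq_mul, ← setIntegral_const]
    exact setIntegral_mono_on ((hh.norm.pow 2).integrableOn_compact hK)
      (integrableOn_const hK.measure_lt_top.ne) hK.measurableSet fun x hx =>
        pow_le_pow_left₀ (norm_nonneg _) (le_ciSup hbdd ⟨x, hx⟩) 2
  rcases (ENNReal.toReal_nonneg (a := μ K)).eq_or_lt with h0 | hpos
  · simp only [← h0, inv_zero, zero_mul]
    positivity
  · rw [inv_mul_le_iff₀ hpos]
    exact hint

theorem stmt_8_general (n : ℕ) (c η : ℝ) (hη : 0 < η)
    (ω : ℝ → ℝ) (hω_mono : ∀ s t : ℝ, 0 ≤ s → s ≤ t → ω s ≤ ω t) (hω0 : ω 0 = 0)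
    (f : EuclideanSpace ℝ (Fin n) → EuclideanSpace ℝ (Fin n))
    (hf : ∀ x i, f x i = c * |x i|)
    (B : Set (EuclideanSpace ℝ (Fin n)))
    (hB : B = {x : EuclideanSpace ℝ (Fin n) | ∀ i, |x i| ≤ η})
    (g : EuclideanSpace ℝ (Fin n) → EuclideanSpace ℝ (Fin n))
    (hg : ContinuousOn g B)
    (pd : Fin n → EuclideanSpace ℝ (Fin n) → ℝ)
    (hpd : ∀ i, ∀ z ∈ B, ∀ t ∈ Set.Ioo (-η) η,
      HasDerivAt (fun s => g (WithLp.toLp 2 (Function.update z i s)) i) (pd i (WithLp.toLp 2 (Function.update z i t))) t)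
    (hmod : ∀ i, ∀ z ∈ B, ∀ s ∈ Set.Ioo (-η) η, ∀ t ∈ Set.Ioo (-η) η,
      |pd i (WithLp.toLp 2 (Function.update z i s)) - pd i (WithLp.toLp 2 (Function.update z i t))| ≤ ω |s - t|)
    (hωη : ω η ≤ c / 2) :
    (1 / 12) * n * η ^ 2 * (c - 2 * ω η) ^ 2 ≤
        (1 / (volume B).toReal) * ∫ x in B, ‖g x - f x‖ ^ 2 ∧
      Real.sqrt 3 / 6 * Real.sqrt n * η * (c - 2 * ω η) ≤
        ⨆ x : B, ‖g (x : EuclideanSpace ℝ (Fin n)) - f (x : EuclideanSpace ℝ (Fin n))‖ := by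
  obtain rfl : B = EuclideanSpace.cube (Fin n) η := hB
  set B := EuclideanSpace.cube (Fin n) η
  have hB : IsCompact B := EuclideanSpace.isCompact_cube η
  have hωη₀ : 0 ≤ ω η := hω0 ▸ hω_mono 0 η le_rfl hη.le
  have hcoord (i : Fin n) : (c - ω η) ^ 2 * η ^ 2 / 12 ≤
      (volume B).toReal⁻¹ * ∫ x in B, (g x i - c * |x i|) ^ 2 :=
    EuclideanSpace.mul_sq_div_twelve_le_average_sq_sub_mul_abs (ω₀ := ω η) i hη (by linarith)
      ((PiLp.continuous_apply 2 _ i).comp_continuousOn hg) (hpd i) fun z hz t ht =>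
        (hmod i z hz t ht 0 ⟨by linarith, hη⟩).trans
          (by simpa using hω_mono |t| η (abs_nonneg t) (abs_le.2 ⟨ht.1.le, ht.2.le⟩))
  have hf' : f = fun x => WithLp.toLp 2 fun i => c * |x i| := funext fun x => by
    ext i
    exact hf x i
  have hgf : ContinuousOn (fun x => g x - f x) B := hg.sub (by rw [hf']; fun_prop)
  have hL2 : (1 / 12) * n * η ^ 2 * (c - 2 * ω η) ^ 2 ≤
      (volume B).toReal⁻¹ * ∫ x in B, ‖g x - f x‖ ^ 2 := by
    have hsq : (c - 2 * ω η) ^ 2 ≤ (c - ω η) ^ 2 :=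
      pow_le_pow_left₀ (by linarith) (by linarith) 2
    calc (1 / 12) * n * η ^ 2 * (c - 2 * ω η) ^ 2
        ≤ ∑ _i : Fin n, (c - ω η) ^ 2 * η ^ 2 / 12 := by
          simp only [Finset.sum_const, Finset.card_univ, Fintype.card_fin, nsmul_eq_mul]
          nlinarith [mul_le_mul_of_nonneg_left hsq (by positivity : (0 : ℝ) ≤ n * η ^ 2)]
      _ ≤ ∑ i, (volume B).toReal⁻¹ * ∫ x in B, (g x i - c * |x i|) ^ 2 :=
          Finset.sum_le_sum fun i _ => hcoord i
      _ = (volume B).toReal⁻¹ * ∫ x in B, ‖g x - f x‖ ^ 2 := by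
          rw [integral_norm_sq_eq_sum fun i =>
            (((PiLp.continuous_apply 2 _ i).comp_continuousOn hgf).pow 2).integrableOn_compact hB,
            Finset.mul_sum]
          simp [hf]
  refine ⟨by simpa only [one_div] using hL2, ?_⟩
  rw [← pow_le_pow_iff_left₀ (mul_nonneg (by positivity) (by linarith))
    (Real.iSup_nonneg fun _ => norm_nonneg _) two_ne_zero]
  calc (Real.sqrt 3 / 6 * Real.sqrt n * η * (c - 2 * ω η)) ^ 2
      = (1 / 12) * n * η ^ 2 * (c - 2 * ω η) ^ 2 := by
        rw [mul_pow, mul_pow, mul_pow, div_pow, Real.sq_sqrt (by norm_num),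
          Real.sq_sqrt n.cast_nonneg]
        ring
    _ ≤ _ := hL2.trans (inv_measure_mul_setIntegral_norm_sq_le_iSup_sq hB hgf)

/-- Quantitative lower bound (Wells): any map `g` on the cube `B = [−η,η]ⁿ` whose `i`-th
component has a partial derivative in the `i`-th direction uniformly continuous with a common
modulus `ω` stays `L²`-far (and uniformly far) from `f(x) = c (|x₁|,…,|x_n|)`. -/
theorem stmt_8 (n : ℕ) (c η : ℝ) (hc : 0 < c) (hη : 0 < η)
    (ω : ℝ → ℝ) (hω_mono : ∀ s t : ℝ, 0 ≤ s → s ≤ t → ω s ≤ ω t) (hω0 : ω 0 = 0)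
    (f : EuclideanSpace ℝ (Fin n) → EuclideanSpace ℝ (Fin n))
    (hf : ∀ x i, f x i = c * |x i|)
    (B : Set (EuclideanSpace ℝ (Fin n)))
    (hB : B = {x : EuclideanSpace ℝ (Fin n) | ∀ i, |x i| ≤ η})
    (g : EuclideanSpace ℝ (Fin n) → EuclideanSpace ℝ (Fin n))
    (hg : ContinuousOn g B)
    (pd : Fin n → EuclideanSpace ℝ (Fin n) → ℝ)
    (hpd : ∀ i, ∀ z ∈ B, ∀ t ∈ Set.Ioo (-η) η,
      HasDerivAt (fun s => g (WithLp.toLp 2 (Function.update z i s)) i) (pd i (WithLp.toLp 2 (Function.update z i t))) t)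
    (hmod : ∀ i, ∀ z ∈ B, ∀ s ∈ Set.Ioo (-η) η, ∀ t ∈ Set.Ioo (-η) η,
      |pd i (WithLp.toLp 2 (Function.update z i s)) - pd i (WithLp.toLp 2 (Function.update z i t))| ≤ ω |s - t|)
    (hωη : ω η ≤ c / 2) :
    (1 / 12) * n * η ^ 2 * (c - 2 * ω η) ^ 2 ≤
        (1 / (volume B).toReal) * ∫ x in B, ‖g x - f x‖ ^ 2 ∧
      Real.sqrt 3 / 6 * Real.sqrt n * η * (c - 2 * ω η) ≤
        ⨆ x : B, ‖g (x : EuclideanSpace ℝ (Fin n)) - f (x : EuclideanSpace ℝ (Fin n))‖ :=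
  stmt_8_general n c η hη ω hω_mono hω0 f hf B hB g hg pd hpd hmod hωη
end

section
/- Let X be a real vector space with norm, e ∈ X with ‖e‖=1, φ ∈ X* with ‖φ‖=1 and φ(e)=1, Y = ker φ. Let A, C ⊆ B_Y (the closed unit ball of Y) with dist(A,C) ≥ d for some d ∈ (0,1). Define Ã_∞ = ∪_{t≥0} t(e+A) and C̃_∞ = ∪_{t≥0} t(e+C). Then dist(e+A, C̃_∞) ≥ d/3. -/
/-! Put `s = 1 - t`. Since `φ` has norm one and vanishes on `a` and `c`, `|s| = |φ (e + a - t • (e + c))|`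
is at most the distance in question, while `a - c = (e + a - t • (e + c)) - s • (e + c)` with
`‖e + c‖ ≤ 2`. Hence `d ≤ ‖a - c‖` is at most three times that distance. -/

theorem ContinuousLinearMap.abs_apply_le_norm {X : Type*} [SeminormedAddCommGroup X]
    [NormedSpace ℝ X] {φ : X →L[ℝ] ℝ} (hφ : ‖φ‖ ≤ 1) (x : X) : |φ x| ≤ ‖x‖ :=
  calc |φ x| = ‖φ x‖ := (Real.norm_eq_abs _).symm
    _ ≤ ‖φ‖ * ‖x‖ := φ.le_opNorm x
    _ ≤ 1 * ‖x‖ := by gcongr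
    _ = ‖x‖ := one_mul _

theorem norm_sub_le_of_apply_eq_one {X : Type*} [SeminormedAddCommGroup X] [NormedSpace ℝ X]
    {φ : X →L[ℝ] ℝ} (hφ : ‖φ‖ ≤ 1) {u v : X} (hu : φ u = 1) (hv : φ v = 1) (t : ℝ) :
    ‖u - v‖ ≤ (1 + ‖v‖) * ‖u - t • v‖ := by
  have hφx : φ (u - t • v) = 1 - t := by simp [hu, hv]
  have hs : |1 - t| ≤ ‖u - t • v‖ := hφx ▸ φ.abs_apply_le_norm hφ (u - t • v)
  have hdecomp : u - v = (u - t • v) - (1 - t) • v := by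
    rw [sub_smul, one_smul]; abel
  calc ‖u - v‖ ≤ ‖u - t • v‖ + |1 - t| * ‖v‖ := by
        rw [hdecomp, ← Real.norm_eq_abs, ← norm_smul]; exact norm_sub_le _ _
    _ ≤ ‖u - t • v‖ + ‖u - t • v‖ * ‖v‖ := by gcongr
    _ = (1 + ‖v‖) * ‖u - t • v‖ := by ring

theorem stmt_11_general {X : Type*} [NormedAddCommGroup X] [NormedSpace ℝ X]
    (e : X) (he : ‖e‖ = 1) (φ : X →L[ℝ] ℝ) (hφ : ‖φ‖ = 1) (hφe : φ e = 1)
    (A C : Set X)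
    (hA : A ⊆ {y : X | φ y = 0 ∧ ‖y‖ ≤ 1}) (hC : C ⊆ {y : X | φ y = 0 ∧ ‖y‖ ≤ 1})
    (d : ℝ)
    (hdist : ∀ a ∈ A, ∀ c ∈ C, d ≤ ‖a - c‖) :
    ∀ a ∈ A, ∀ t : ℝ, 0 ≤ t → ∀ c ∈ C, d / 3 ≤ ‖(e + a) - t • (e + c)‖ := by
  intro a ha t _ c hc
  obtain ⟨hφa, -⟩ := hA ha
  obtain ⟨hφc, hc1⟩ := hC hc
  have hec : ‖e + c‖ ≤ 2 := (norm_add_le e c).trans (by linarith)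
  have hcone := norm_sub_le_of_apply_eq_one hφ.le (u := e + a) (v := e + c)
    (by simp [hφe, hφa]) (by simp [hφe, hφc]) t
  rw [add_sub_add_left_eq_sub] at hcone
  have : d ≤ 3 * ‖(e + a) - t • (e + c)‖ :=
    calc d ≤ ‖a - c‖ := hdist a ha c hc
      _ ≤ (1 + ‖e + c‖) * ‖(e + a) - t • (e + c)‖ := hcone
      _ ≤ 3 * ‖(e + a) - t • (e + c)‖ := by gcongr; linarith
  linarith

/-- Cone separation estimate: if `A, C` lie in the unit ball of `Y = ker φ` with
`dist(A,C) ≥ d`, then `dist(e + A, C̃_∞) ≥ d/3` where `C̃_∞ = ∪_{t≥0} t(e+C)`. -/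
theorem stmt_11 {X : Type*} [NormedAddCommGroup X] [NormedSpace ℝ X]
    (e : X) (he : ‖e‖ = 1) (φ : X →L[ℝ] ℝ) (hφ : ‖φ‖ = 1) (hφe : φ e = 1)
    (A C : Set X)
    (hA : A ⊆ {y : X | φ y = 0 ∧ ‖y‖ ≤ 1}) (hC : C ⊆ {y : X | φ y = 0 ∧ ‖y‖ ≤ 1})
    (d : ℝ) (hd0 : 0 < d) (hd1 : d < 1)
    (hdist : ∀ a ∈ A, ∀ c ∈ C, d ≤ ‖a - c‖) :
    ∀ a ∈ A, ∀ t : ℝ, 0 ≤ t → ∀ c ∈ C, d / 3 ≤ ‖(e + a) - t • (e + c)‖ :=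
  stmt_11_general e he φ hφ hφe A C hA hC d hdist
end

section
/- Let X = ℓ₂ (infinite-dimensional separable Hilbert space with orthonormal basis (e_i)), A = {x ∈ B_X : x_j ≤ 0 for all j}, C = {x ∈ S_X : x_j ≥ 0 for all j}. Then dist(A,C) = 1, yet for every z ∈ X, r > 0 with A ⊆ B(z,r) and every ε > 0, the ball B(z,r+ε) intersects C. -/
/-!
`A` and `C` lie in opposite orthants, so `⟪a, c⟫ ≤ 0` and hence `‖a - c‖ ≥ ‖c‖ = 1`, with equality
at `a = 0`, `c = e₀`. For the second claim, `‖e_i - z‖² = ‖-e_i - z‖² - 4 z_i`, and `z_i` is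
arbitrarily small for suitable `i` since `z ∈ ℓ₂`; so a ball around `z` containing `-e_i ∈ A`
contains `e_i ∈ C` once its radius is slightly enlarged.
-/

open scoped InnerProductSpace ENNReal

section InnerProductSpace

variable {E : Type*} [NormedAddCommGroup E] [InnerProductSpace ℝ E]

theorem norm_le_norm_sub_of_inner_nonpos {a c : E} (h : ⟪a, c⟫_ℝ ≤ 0) : ‖c‖ ≤ ‖a - c‖ := by
  have hsq : ‖c‖ ^ 2 ≤ ‖a - c‖ ^ 2 := by
    rw [norm_sub_sq_real]
    nlinarith [sq_nonneg ‖a‖]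
  exact (pow_le_pow_iff_left₀ (norm_nonneg _) (norm_nonneg _) two_ne_zero).mp hsq

theorem dist_le_add_of_dist_neg_le {e z : E} {r ε : ℝ} (hε : 0 ≤ ε) (hneg : dist (-e) z ≤ r)
    (hinner : -(r * ε / 2) ≤ ⟪e, z⟫_ℝ) : dist e z ≤ r + ε := by
  have hr : 0 ≤ r := dist_nonneg.trans hneg
  have hreflect : ‖e - z‖ ^ 2 = ‖-e - z‖ ^ 2 - 4 * ⟪e, z⟫_ℝ := by
    rw [show -e - z = -(e + z) by abel, norm_neg, norm_sub_sq_real, norm_add_sq_real]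
    ring
  have hsq : dist e z ^ 2 ≤ (r + ε) ^ 2 := by
    rw [dist_eq_norm, hreflect]
    rw [dist_eq_norm] at hneg
    nlinarith [norm_nonneg (-e - z), mul_nonneg hr hε]
  exact (pow_le_pow_iff_left₀ dist_nonneg (by positivity) two_ne_zero).mp hsq

end InnerProductSpace

namespace lp

variable {ι : Type*}

theorem inner_nonpos_of_nonpos_of_nonneg {a c : lp (fun _ : ι => ℝ) 2} (ha : ∀ j, a j ≤ 0)
    (hc : ∀ j, 0 ≤ c j) : ⟪a, c⟫_ℝ ≤ 0 := by
  rw [lp.inner_eq_tsum]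
  refine tsum_nonpos fun j => ?_
  rw [real_inner_eq_re_inner, RCLike.inner_apply, conj_trivial]
  exact mul_nonpos_of_nonneg_of_nonpos (hc j) (ha j)

theorem exists_norm_apply_lt [Infinite ι] {E : ι → Type*} [∀ i, NormedAddCommGroup (E i)]
    {p : ℝ≥0∞} (hp : 0 < p.toReal) (z : lp E p) {δ : ℝ} (hδ : 0 < δ) : ∃ i, ‖z i‖ < δ := by
  have hsmall := ((lp.memℓp z).summable hp).tendsto_cofinite_zero
  obtain ⟨i, hi⟩ := (hsmall.eventually (gt_mem_nhds (Real.rpow_pos_of_pos hδ p.toReal))).exists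
  exact ⟨i, (Real.rpow_lt_rpow_iff (norm_nonneg _) hδ.le hp).mp hi⟩

end lp

/-- In `ℓ₂`, with `A` the negative part of the unit ball and `C` the positive part of the unit
sphere, `dist(A,C) = 1`, yet every closed ball containing `A` meets `C` after arbitrarily small
enlargement of its radius. -/
theorem stmt_16
    (A C : Set (lp (fun _ : ℕ => ℝ) 2))
    (hA : A = {x : lp (fun _ : ℕ => ℝ) 2 | ‖x‖ ≤ 1 ∧ ∀ j, x j ≤ 0})
    (hC : C = {x : lp (fun _ : ℕ => ℝ) 2 | ‖x‖ = 1 ∧ ∀ j, 0 ≤ x j}) :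
    sInf (Set.image2 dist A C) = 1 ∧
      ∀ (z : lp (fun _ : ℕ => ℝ) 2) (r : ℝ), 0 < r → A ⊆ Metric.closedBall z r →
        ∀ ε > 0, ∃ y ∈ C, y ∈ Metric.closedBall z (r + ε) := by
  subst hA hC
  set e : ℕ → lp (fun _ : ℕ => ℝ) 2 := fun i => lp.single 2 i 1
  have he_norm (i : ℕ) : ‖e i‖ = 1 := by simp [e, lp.norm_single]
  have he_nonneg (i j : ℕ) : 0 ≤ e i j := by
    simp only [e, lp.single_apply]
    by_cases hji : j = i <;> simp [hji]
  have he_mem (i : ℕ) : e i ∈ {x : lp (fun _ : ℕ => ℝ) 2 | ‖x‖ = 1 ∧ ∀ j, 0 ≤ x j} :=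
    ⟨he_norm i, he_nonneg i⟩
  have hneg_mem (i : ℕ) : -e i ∈ {x : lp (fun _ : ℕ => ℝ) 2 | ‖x‖ ≤ 1 ∧ ∀ j, x j ≤ 0} :=
    ⟨by rw [norm_neg, he_norm], fun j => by simpa using he_nonneg i j⟩
  refine ⟨IsLeast.csInf_eq ⟨⟨0, by simp, e 0, he_mem 0, by simp [he_norm]⟩, ?_⟩, ?_⟩
  · rintro _ ⟨a, ⟨-, ha⟩, c, ⟨hc, hc'⟩, rfl⟩
    rw [dist_eq_norm, ← hc]
    exact norm_le_norm_sub_of_inner_nonpos (lp.inner_nonpos_of_nonpos_of_nonneg ha hc')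
  · intro z r hr hsub ε hε
    obtain ⟨i, hi⟩ := lp.exists_norm_apply_lt (by norm_num) z (by positivity : 0 < r * ε / 2)
    refine ⟨e i, he_mem i, dist_le_add_of_dist_neg_le hε.le (hsub (hneg_mem i)) ?_⟩
    have he_inner : ⟪e i, z⟫_ℝ = z i := by simp [e, lp.inner_single_left]
    rw [he_inner]
    rw [Real.norm_eq_abs] at hi
    linarith [neg_abs_le (z i)]
end

section
/- Let X = c₀ with canonical basis (e_l), A = {0} ∪ { 2^{−n} e_l : n,l ∈ ℕ }, and f : A → ℝ defined by f(0) = 0 and f(2^{−n} e_l) = 2^{−3n}. Then A is closed in c₀ and for all x, y ∈ A one has |f(y) − f(x)| ≤ 8·‖y−x‖³. -/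
/-!
Distinct points `x, y` of `A` satisfy `max ‖x‖ ‖y‖ ≤ 2 ‖x - y‖`: this is clear when one of them is
`0`, and for `2^{-n} e_l`, `2^{-m} e_q` with `n ≤ m` the `l`-th coordinate of the difference is
`2^{-n}` or `2^{-n} - 2^{-m} ≥ 2^{-n-1}`. As `f = ‖·‖³` on `A`, the Hölder bound follows from
`|‖y‖³ - ‖x‖³| ≤ max ‖x‖ ‖y‖ ^ 3`. The same inequality makes the points of `A` outside any ball
around `0` uniformly discrete, so `A` is closed.
-/

open scoped ZeroAtInfty

section NormSeparated

variable {E : Type*} [NormedAddCommGroup E]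

theorem isClosed_of_max_norm_le_mul_norm_sub {S : Set E} {C : ℝ} (hC : 0 < C) (h0 : 0 ∈ S)
    (hS : ∀ x ∈ S, ∀ y ∈ S, x ≠ y → max ‖x‖ ‖y‖ ≤ C * ‖x - y‖) : IsClosed S := by
  refine closure_subset_iff_isClosed.mp fun x hx => ?_
  rcases eq_or_ne x 0 with rfl | hx0
  · exact h0
  set r := ‖x‖ / 2
  have hr : 0 < r := by positivity
  have hfar : IsClosed (S ∩ {y | r ≤ ‖y‖}) := by
    refine Metric.isClosed_of_pairwise_le_dist (div_pos hr hC) fun y hy z hz hyz => ?_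
    change r / C ≤ dist y z
    rw [dist_eq_norm, div_le_iff₀' hC]
    exact (hy.2.trans (le_max_left _ _)).trans (hS y hy.1 z hz.1 hyz)
  have hnear : closure {y : E | r ≤ ‖y‖}ᶜ ⊆ {y | ‖y‖ ≤ r} :=
    closure_minimal (fun y (hy : ¬r ≤ ‖y‖) => (not_le.mp hy).le)
      (isClosed_le continuous_norm continuous_const)
  rcases subset_closure_inter_union_closure_compl_right hx with hx | hx
  · exact (hfar.closure_eq ▸ hx).1
  · have : ‖x‖ ≤ ‖x‖ / 2 := hnear hx
    have : 0 < ‖x‖ := norm_pos_iff.mpr hx0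
    linarith

theorem abs_norm_pow_sub_norm_pow_le {S : Set E} {C : ℝ} (hC : 0 ≤ C)
    (hS : ∀ x ∈ S, ∀ y ∈ S, x ≠ y → max ‖x‖ ‖y‖ ≤ C * ‖x - y‖) (k : ℕ)
    {x y : E} (hx : x ∈ S) (hy : y ∈ S) : |‖y‖ ^ k - ‖x‖ ^ k| ≤ (C * ‖y - x‖) ^ k := by
  rcases eq_or_ne x y with rfl | hxy
  · simp only [sub_self, abs_zero]
    positivity
  have hmax : max ‖x‖ ‖y‖ ≤ C * ‖y - x‖ := norm_sub_rev x y ▸ hS x hx y hy hxy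
  refine abs_sub_le_of_nonneg_of_le (by positivity) ?_ (by positivity) ?_ <;>
    exact pow_le_pow_left₀ (norm_nonneg _) ((by simp : _ ≤ max ‖x‖ ‖y‖).trans hmax) k

end NormSeparated

section DyadicBasisMultiples

variable {e : ℕ → C₀(ℕ, ℝ)}

theorem ZeroAtInftyContinuousMap.norm_apply_le_norm {α β : Type*} [TopologicalSpace α]
    [SeminormedAddCommGroup β] (g : C₀(α, β)) (x : α) : ‖g x‖ ≤ ‖g‖ :=
  g.toBCF.norm_coe_le_norm x

theorem norm_basis_eq_one (he : ∀ l j : ℕ, e l j = if j = l then (1 : ℝ) else 0) (l : ℕ) :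
    ‖e l‖ = 1 := by
  refine le_antisymm ?_ ?_
  · refine (BoundedContinuousFunction.norm_le zero_le_one).2 fun j => ?_
    change |e l j| ≤ 1
    rw [he]
    split_ifs <;> norm_num
  · simpa [he] using (e l).norm_apply_le_norm l

theorem abs_sub_ite_le_norm_smul_sub_smul (he : ∀ l j : ℕ, e l j = if j = l then (1 : ℝ) else 0)
    (a b : ℝ) (l q : ℕ) : |a - if l = q then b else 0| ≤ ‖a • e l - b • e q‖ := by
  simpa [he] using (a • e l - b • e q).norm_apply_le_norm l

theorem inv_two_pow_le_two_mul_norm_sub (he : ∀ l j : ℕ, e l j = if j = l then (1 : ℝ) else 0)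
    {n m : ℕ} (hnm : n ≤ m) (l q : ℕ) (hne : ((2 : ℝ) ^ n)⁻¹ • e l ≠ ((2 : ℝ) ^ m)⁻¹ • e q) :
    ((2 : ℝ) ^ n)⁻¹ ≤ 2 * ‖((2 : ℝ) ^ n)⁻¹ • e l - ((2 : ℝ) ^ m)⁻¹ • e q‖ := by
  refine le_trans ?_ (mul_le_mul_of_nonneg_left (abs_sub_ite_le_norm_smul_sub_smul he _ _ l q)
    zero_le_two)
  split_ifs with hlq
  · subst hlq
    have hlt : n < m := hnm.lt_of_ne (by rintro rfl; exact hne rfl)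
    have hhalf : 2 * ((2 : ℝ) ^ m)⁻¹ ≤ ((2 : ℝ) ^ n)⁻¹ :=
      calc 2 * ((2 : ℝ) ^ m)⁻¹ ≤ 2 * ((2 : ℝ) ^ (n + 1))⁻¹ := by gcongr <;> norm_num; exact hlt
        _ = ((2 : ℝ) ^ n)⁻¹ := by rw [pow_succ]; ring
    rw [abs_of_pos (by linarith [show (0 : ℝ) < ((2 : ℝ) ^ m)⁻¹ by positivity])]
    linarith
  · rw [sub_zero, abs_of_pos (by positivity)]
    linarith [show (0 : ℝ) < ((2 : ℝ) ^ n)⁻¹ by positivity]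

theorem norm_inv_two_pow_smul_basis (he : ∀ l j : ℕ, e l j = if j = l then (1 : ℝ) else 0)
    (n l : ℕ) : ‖((2 : ℝ) ^ n)⁻¹ • e l‖ = ((2 : ℝ) ^ n)⁻¹ := by
  simp [norm_smul, norm_basis_eq_one he]

theorem max_norm_le_two_mul_norm_sub (he : ∀ l j : ℕ, e l j = if j = l then (1 : ℝ) else 0)
    (n m l q : ℕ) (hne : ((2 : ℝ) ^ n)⁻¹ • e l ≠ ((2 : ℝ) ^ m)⁻¹ • e q) :
    max ‖((2 : ℝ) ^ n)⁻¹ • e l‖ ‖((2 : ℝ) ^ m)⁻¹ • e q‖ ≤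
      2 * ‖((2 : ℝ) ^ n)⁻¹ • e l - ((2 : ℝ) ^ m)⁻¹ • e q‖ := by
  have hanti {i j : ℕ} (hij : i ≤ j) : ((2 : ℝ) ^ j)⁻¹ ≤ ((2 : ℝ) ^ i)⁻¹ :=
    inv_anti₀ (by positivity) (pow_le_pow_right₀ one_le_two hij)
  rw [norm_inv_two_pow_smul_basis he, norm_inv_two_pow_smul_basis he]
  rcases le_total n m with hnm | hmn
  · rw [max_eq_left (hanti hnm)]
    exact inv_two_pow_le_two_mul_norm_sub he hnm l q hne
  · rw [max_eq_right (hanti hmn), norm_sub_rev]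
    exact inv_two_pow_le_two_mul_norm_sub he hmn q l hne.symm

theorem max_norm_le_two_mul_norm_sub_of_mem {A : Set C₀(ℕ, ℝ)}
    (hA : A = {0} ∪ {x : C₀(ℕ, ℝ) | ∃ n : ℕ, 1 ≤ n ∧ ∃ l : ℕ, x = ((2 : ℝ) ^ n)⁻¹ • e l})
    (he : ∀ l j : ℕ, e l j = if j = l then (1 : ℝ) else 0) :
    ∀ x ∈ A, ∀ y ∈ A, x ≠ y → max ‖x‖ ‖y‖ ≤ 2 * ‖x - y‖ := by
  subst hA
  rintro x (rfl | ⟨n, -, l, rfl⟩) y (rfl | ⟨m, -, q, rfl⟩) hxy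
  · exact absurd rfl hxy
  · simpa using le_mul_of_one_le_left (norm_nonneg _) one_le_two
  · simpa using le_mul_of_one_le_left (norm_nonneg _) one_le_two
  · exact max_norm_le_two_mul_norm_sub he n m l q hxy

theorem eq_norm_pow_three_of_mem {A : Set C₀(ℕ, ℝ)}
    (hA : A = {0} ∪ {x : C₀(ℕ, ℝ) | ∃ n : ℕ, 1 ≤ n ∧ ∃ l : ℕ, x = ((2 : ℝ) ^ n)⁻¹ • e l})
    (he : ∀ l j : ℕ, e l j = if j = l then (1 : ℝ) else 0)
    {f : C₀(ℕ, ℝ) → ℝ} (hf0 : f 0 = 0)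
    (hfe : ∀ n : ℕ, 1 ≤ n → ∀ l : ℕ, f (((2 : ℝ) ^ n)⁻¹ • e l) = (((2 : ℝ) ^ n)⁻¹) ^ 3) :
    ∀ x ∈ A, f x = ‖x‖ ^ 3 := by
  subst hA
  rintro x (rfl | ⟨n, hn, l, rfl⟩)
  · simp [hf0]
  · rw [hfe n hn l, norm_inv_two_pow_smul_basis he]

end DyadicBasisMultiples

/-- In `c₀`, the set `A = {0} ∪ {2^{−n} e_l}` is closed and the function `f(0) = 0`,
`f(2^{−n} e_l) = 2^{−3n}` satisfies `|f(y) − f(x)| ≤ 8 ‖y − x‖³` on `A`. -/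
theorem stmt_18
    (e : ℕ → C₀(ℕ, ℝ)) (he : ∀ l j : ℕ, e l j = if j = l then (1 : ℝ) else 0)
    (A : Set C₀(ℕ, ℝ))
    (hA : A = {0} ∪ {x : C₀(ℕ, ℝ) | ∃ n : ℕ, 1 ≤ n ∧ ∃ l : ℕ, x = ((2 : ℝ) ^ n)⁻¹ • e l})
    (f : C₀(ℕ, ℝ) → ℝ) (hf0 : f 0 = 0)
    (hfe : ∀ n : ℕ, 1 ≤ n → ∀ l : ℕ, f (((2 : ℝ) ^ n)⁻¹ • e l) = (((2 : ℝ) ^ n)⁻¹) ^ 3) :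
    IsClosed A ∧ ∀ x ∈ A, ∀ y ∈ A, |f y - f x| ≤ 8 * ‖y - x‖ ^ 3 := by
  have hsep := max_norm_le_two_mul_norm_sub_of_mem hA he
  refine ⟨isClosed_of_max_norm_le_mul_norm_sub two_pos (hA ▸ Or.inl rfl) hsep,
    fun x hx y hy => ?_⟩
  rw [eq_norm_pow_three_of_mem hA he hf0 hfe x hx, eq_norm_pow_three_of_mem hA he hf0 hfe y hy]
  calc |‖y‖ ^ 3 - ‖x‖ ^ 3| ≤ (2 * ‖y - x‖) ^ 3 :=
        abs_norm_pow_sub_norm_pow_le zero_le_two hsep 3 hx hy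
    _ = 8 * ‖y - x‖ ^ 3 := by ring
end
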